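/- Let μ be a probability measure on a measurable space X′, let κ be a Markov kernel from X′ to a measurable space Z, and let g be a probability measure on Z. Then the KL divergence of the mixture is bounded by the average KL divergence: D_KL( ∫ κ(·|x′) dμ(x′) ‖ g ) ≤ ∫ D_KL( κ(·|x′) ‖ g ) dμ(x′). -/

import Mathlib

/-!
Write `ν = κ ∘ₘ μ` for the mixture. Then `D(ν ‖ g) = ∫ log (dν/dg) dν` is the `μ`-average of the
cross entropies `∫ log (dν/dg) dκ(·|x')`, and each of these is at most `D(κ(·|x') ‖ g)`: the
difference is `D(κ(·|x') ‖ ν) ≥ 0` by Gibbs' inequality. This requires `κ(·|x') ≪ ν`, which holds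
for `μ`-a.e. `x'`: a `ν`-null set lies, up to a `g`-null set, inside `{dν/dg = 0}`, and that set
is `ν`-null, hence `κ(·|x')`-null for `μ`-a.e. `x'`.
-/

open MeasureTheory ProbabilityTheory

/-- Kullback–Leibler divergence (real-valued; meaningful when `μ ≪ ν` and the
log-likelihood ratio is integrable, which is assumed where used). -/
noncomputable def klReal {X : Type*} [MeasurableSpace X] (μ ν : Measure X) : ℝ :=
  ∫ x, llr μ ν x ∂μ

namespace MeasureTheory

variable {α : Type*} [MeasurableSpace α] {p ν g : Measure α}

lemma Measure.AbsolutelyContinuous.of_ae_rnDeriv_ne_zero [ν.HaveLebesgueDecomposition g]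
    (hpg : p ≪ g) (hνg : ν ≪ g) (hpos : ∀ᵐ z ∂p, ν.rnDeriv g z ≠ 0) : p ≪ ν := by
  have hdens : p.withDensity (ν.rnDeriv g) ≪ g.withDensity (ν.rnDeriv g) := by
    refine Measure.AbsolutelyContinuous.mk fun s hs hgs ↦ ?_
    rw [withDensity_apply _ hs, lintegral_eq_zero_iff (ν.measurable_rnDeriv g)] at hgs ⊢
    exact (hpg.restrict s).ae_eq hgs
  rw [← Measure.withDensity_rnDeriv_eq ν g hνg]
  exact (withDensity_absolutelyContinuous' (ν.measurable_rnDeriv g).aemeasurable hpos).trans hdens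

lemma llr_ae_eq_llr_add_llr [SigmaFinite p] [SigmaFinite ν] [SigmaFinite g]
    (hpν : p ≪ ν) (hνg : ν ≪ g) : llr p g =ᵐ[p] llr p ν + llr ν g := by
  filter_upwards [(hpν.trans hνg).ae_le (Measure.rnDeriv_mul_rnDeriv hpν),
    Measure.rnDeriv_pos hpν, hpν.ae_le (Measure.rnDeriv_lt_top p ν),
    hpν.ae_le (Measure.rnDeriv_pos hνg), (hpν.trans hνg).ae_le (Measure.rnDeriv_lt_top ν g)]
    with z hmul hpν_pos hpν_fin hνg_pos hνg_fin
  rw [llr, ← hmul, Pi.mul_apply, ENNReal.toReal_mul, Real.log_mul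
    (ENNReal.toReal_pos hpν_pos.ne' hpν_fin.ne).ne' (ENNReal.toReal_pos hνg_pos.ne' hνg_fin.ne).ne']
  rfl

lemma integral_llr_le_integral_llr [IsProbabilityMeasure p] [IsProbabilityMeasure ν]
    [SigmaFinite g] (hpν : p ≪ ν) (hνg : ν ≪ g)
    (hν_int : Integrable (llr ν g) p) (hp_int : Integrable (llr p g) p) :
    ∫ z, llr ν g z ∂p ≤ ∫ z, llr p g z ∂p := by
  have hchain := llr_ae_eq_llr_add_llr hpν hνg
  have hpν_int : Integrable (llr p ν) p :=
    (hp_int.sub hν_int).congr (by filter_upwards [hchain] with z hz; simp [hz])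
  have hgibbs := InformationTheory.integral_llr_add_sub_measure_univ_nonneg hpν hpν_int
  simp only [probReal_univ, add_sub_cancel_right] at hgibbs
  rw [integral_congr_ae hchain, integral_add' hpν_int hν_int]
  linarith

end MeasureTheory

namespace MeasureTheory.Measure

variable {X Z : Type*} [MeasurableSpace X] [MeasurableSpace Z] {μ : Measure X} {κ : Kernel X Z}

section Integral

variable {E : Type*} [NormedAddCommGroup E] [NormedSpace ℝ E] {f : Z → E}

lemma integrable_integral_of_integrable_comp [SFinite μ] [IsSFiniteKernel κ]
    (hf : Integrable f (κ ∘ₘ μ)) : Integrable (fun x ↦ ∫ z, f z ∂κ x) μ := by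
  rw [comp_eq_comp_const_apply] at hf
  simpa using hf.integral_comp

lemma integral_comp [SFinite μ] [IsSFiniteKernel κ] (hf : Integrable f (κ ∘ₘ μ)) :
    ∫ z, f z ∂(κ ∘ₘ μ) = ∫ x, ∫ z, f z ∂κ x ∂μ := by
  rw [comp_eq_comp_const_apply] at hf ⊢
  simpa using Kernel.integral_comp hf

end Integral

variable {g : Measure Z}

lemma comp_absolutelyContinuous_of_ae (hac : ∀ᵐ x ∂μ, κ x ≪ g) : κ ∘ₘ μ ≪ g := by
  refine (AbsolutelyContinuous.comp_left μ (η := Kernel.const X g) (by simpa using hac)).trans ?_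
  rw [const_comp]
  exact AbsolutelyContinuous.smul_left .rfl _

lemma ae_absolutelyContinuous_comp [SFinite μ] [IsSFiniteKernel κ] [SigmaFinite g]
    (hac : ∀ᵐ x ∂μ, κ x ≪ g) : ∀ᵐ x ∂μ, κ x ≪ κ ∘ₘ μ := by
  have hνg := comp_absolutelyContinuous_of_ae hac
  filter_upwards [ae_ae_of_ae_comp (rnDeriv_pos hνg), hac] with x hpos hx
  exact hx.of_ae_rnDeriv_ne_zero hνg (hpos.mono fun _ h ↦ h.ne')

end MeasureTheory.Measure

/-- the KL divergence of a mixture is bounded by the average KL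
divergence: for a probability measure `μ` on `X'`, a Markov kernel `κ : X' → Z` and a
probability measure `g` on `Z`,
`D_KL(∫ κ(·|x′) dμ(x′) ‖ g) ≤ ∫ D_KL(κ(·|x′) ‖ g) dμ(x′)`. -/
theorem stmt_9 {X' Z : Type*} [MeasurableSpace X'] [MeasurableSpace Z]
    (μ : Measure X') [IsProbabilityMeasure μ]
    (κ : Kernel X' Z) [IsMarkovKernel κ]
    (g : Measure Z) [IsProbabilityMeasure g]
    -- the KL divergences appearing are well defined and the right-hand side is finite
    (hac : ∀ x', κ x' ≪ g)
    (hint : ∀ x', Integrable (llr (κ x') g) (κ x'))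
    (hmixint : Integrable (llr (μ.bind (fun x' => κ x')) g) (μ.bind (fun x' => κ x')))
    (hout : Integrable (fun x' => klReal (κ x') g) μ) :
    klReal (μ.bind (fun x' => κ x')) g ≤ ∫ x', klReal (κ x') g ∂μ := by
  have hνg : κ ∘ₘ μ ≪ g := Measure.comp_absolutelyContinuous_of_ae (ae_of_all μ hac)
  calc klReal (κ ∘ₘ μ) g = ∫ x', ∫ z, llr (κ ∘ₘ μ) g z ∂κ x' ∂μ := Measure.integral_comp hmixint
    _ ≤ ∫ x', klReal (κ x') g ∂μ := by
      refine integral_mono_ae (Measure.integrable_integral_of_integrable_comp hmixint) hout ?_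
      filter_upwards [Measure.ae_absolutelyContinuous_comp (ae_of_all μ hac),
        Measure.ae_integrable_of_integrable_comp hmixint] with x' hx' hint_x'
      exact integral_llr_le_integral_llr hx' hνg hint_x' (hint x')
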